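/- Let n ≥ 2 be an integer, P = O × I ⊂ ℝⁿ with O ⊂ ℝ^{n−1} an open cube of side length l > 0 and I ⊂ ℝ an interval of length h > 0, and 1 ≤ p < ∞. Then there exists a constant C > 0 depending only on n and p such that for all rotations R₁, R₂ ∈ SO(n) and all translation vectors d ∈ ℝⁿ: ∫_P |(R₂ − R₁)x + d|^p dx ≥ C l^p |P| |R₂ − R₁|^p. -/

import Mathlib

open MeasureTheory Filter Topology Set
open scoped ENNReal

noncomputable section

namespace LayeredRigidity

abbrev Vec (n : ℕ) := EuclideanSpace ℝ (Fin n)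
abbrev Mat (n : ℕ) := Matrix (Fin n) (Fin n) ℝ

/-- Interpret a plain function `Fin n → ℝ` as an element of Euclidean space. -/
def toVec {n : ℕ} (f : Fin n → ℝ) : Vec n := WithLp.toLp 2 f

/-- The last coordinate `x_n` of a vector. -/
def coordLast {n : ℕ} (x : Vec n) : ℝ :=
  if h : 0 < n then x ⟨n - 1, Nat.sub_lt h Nat.one_pos⟩ else 0

/-- The first coordinate `x_1` of a vector. -/
def coord0 {n : ℕ} (x : Vec n) : ℝ := if h : 0 < n then x ⟨0, h⟩ else 0

/-- Standard basis vector `e_j`. -/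
def bas {n : ℕ} (j : Fin n) : Vec n := EuclideanSpace.single j 1

/-- The last standard basis vector `e_n`, as a plain function. -/
def eL {n : ℕ} : Fin n → ℝ := fun j => if (j : ℕ) + 1 = n then 1 else 0

/-- The last standard basis vector `e_n`. -/
def eLast {n : ℕ} : Vec n := toVec eL

/-- The first standard basis vector `e_1`. -/
def eFirst {n : ℕ} : Vec n := toVec (fun j => if (j : ℕ) = 0 then 1 else 0)

/-- Replace the last coordinate of `x` by `t`. -/
def setLast {n : ℕ} (x : Vec n) (t : ℝ) : Vec n :=
  toVec (fun j => if (j : ℕ) + 1 = n then t else x j)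

/-- Frobenius norm of a matrix. -/
def frob {n : ℕ} (F : Mat n) : ℝ := Real.sqrt (∑ i, ∑ j, (F i j) ^ 2)

/-- The special orthogonal group `SO(n)`, as a set of matrices. -/
def SO (n : ℕ) : Set (Mat n) := {F | F * F.transpose = 1 ∧ F.det = 1}

/-- Frobenius distance of a matrix to `SO(n)`. -/
def distSO {n : ℕ} (F : Mat n) : ℝ := sInf ((fun Q => frob (F - Q)) '' SO n)

/-- Matrix-vector multiplication, landing in Euclidean space. -/
def matVec {n : ℕ} (A : Mat n) (x : Vec n) : Vec n := toVec (fun i => ∑ j, A i j * x j)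

/-- Outer product `v ⊗ w = v wᵀ`. -/
def outerM {n : ℕ} (v w : Fin n → ℝ) : Mat n := Matrix.of fun i j => v i * w j

/-- The `e_n`-directional component of a direction-indexed family (i.e. `v (n-1)`). -/
def lastOf {α : Type*} [AddCommMonoid α] {n : ℕ} (v : Fin n → α) : α :=
  ∑ j : Fin n, if (j : ℕ) + 1 = n then v j else 0

/-- The (periodically extended, `ε`-dilated) stiff layers `ε Y_stiff ⊆ ℝⁿ`. -/
def stiffLayers {n : ℕ} (lam ε : ℝ) : Set (Vec n) :=
  {x | (⌈coordLast x / ε⌉ : ℝ) - coordLast x / ε ≤ 1 - lam}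

/-- The (periodically extended, `ε`-dilated) soft layers `ε Y_soft ⊆ ℝⁿ`. -/
def softLayers {n : ℕ} (lam ε : ℝ) : Set (Vec n) :=
  {x | 1 - lam < (⌈coordLast x / ε⌉ : ℝ) - coordLast x / ε}

/-- One-dimensional stiff layers `ε I_stiff ⊆ ℝ`. -/
def stiff1D (lam ε : ℝ) : Set ℝ := {t | (⌈t / ε⌉ : ℝ) - t / ε ≤ 1 - lam}

/-- One-dimensional soft layers `ε I_soft ⊆ ℝ`. -/
def soft1D (lam ε : ℝ) : Set ℝ := {t | 1 - lam < (⌈t / ε⌉ : ℝ) - t / ε}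

/-- A set is cross-section connected if all its horizontal cross-sections are connected. -/
def CrossSectionConnected {n : ℕ} (Ω : Set (Vec n)) : Prop :=
  ∀ t : ℝ, IsPreconnected {x ∈ Ω | coordLast x = t}

/-- A set is flat if every nonempty horizontal cross-section of its closure has nonempty
relative interior in the corresponding hyperplane. -/
def Flat {n : ℕ} (Ω : Set (Vec n)) : Prop :=
  ∀ t : ℝ, (closure Ω ∩ {x | coordLast x = t}).Nonempty →
    ∃ x ∈ closure Ω ∩ {x | coordLast x = t}, ∃ r > (0 : ℝ),
      Metric.ball x r ∩ {y | coordLast y = t} ⊆ closure Ω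

/-- A Lipschitz domain: an open nonempty set whose boundary is locally, after an isometry of the
ambient space, the graph of a Lipschitz function with the set lying on one side. -/
def IsLipschitzDomain {n : ℕ} (Ω : Set (Vec n)) : Prop :=
  IsOpen Ω ∧ Ω.Nonempty ∧
  ∀ x ∈ frontier Ω, ∃ e : Vec n ≃ᵢ Vec n, ∃ K : NNReal, ∃ f : Vec n → ℝ, ∃ r : ℝ,
    0 < r ∧ LipschitzWith K f ∧
    ∀ y ∈ Metric.ball x r, (y ∈ Ω ↔ f (setLast (e y) 0) < coordLast (e y))

/-- Componentwise membership in `L^p(Ω)`. -/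
def LpFn {n : ℕ} {ι : Type*} (Ω : Set (Vec n)) (p : ℝ) (u : Vec n → ι → ℝ) : Prop :=
  ∀ i, MemLp (fun x => u x i) (ENNReal.ofReal p) (volume.restrict Ω)

/-- `G` is the weak (distributional) derivative of `u` on `Ω`:
integration by parts against smooth compactly supported test functions. -/
def IsWeakDeriv {n : ℕ} {ι : Type*} (Ω : Set (Vec n)) (u : Vec n → ι → ℝ)
    (G : Vec n → ι → Fin n → ℝ) : Prop :=
  ∀ φ : Vec n → ℝ, ContDiff ℝ (⊤ : ℕ∞) φ → HasCompactSupport φ → tsupport φ ⊆ Ω →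
    ∀ i j, ∫ x in Ω, u x i * fderiv ℝ φ x (bas j) = - ∫ x in Ω, G x i j * φ x

/-- Membership in the Sobolev space `W^{1,p}(Ω)`, with explicit weak derivative `G`. -/
def SobolevFn {n : ℕ} {ι : Type*} (Ω : Set (Vec n)) (p : ℝ) (u : Vec n → ι → ℝ)
    (G : Vec n → ι → Fin n → ℝ) : Prop :=
  LpFn Ω p u ∧ LpFn Ω p (fun x (ij : ι × Fin n) => G x ij.1 ij.2) ∧ IsWeakDeriv Ω u G

/-- `W^{1,p}(Ω;ℝⁿ)` for vector-valued maps, with gradient matrix `Du` (`(Du)_{ij} = ∂_j u_i`). -/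
def SobolevVec {n : ℕ} (Ω : Set (Vec n)) (p : ℝ) (u : Vec n → Vec n)
    (Du : Vec n → Mat n) : Prop :=
  SobolevFn Ω p (fun x i => u x i) (fun x i j => Du x i j)

/-- `W^{1,p}(Ω;ℝ^{n×n})` for matrix-valued maps; `DR x j` is the partial derivative `∂_j R`. -/
def SobolevMat {n : ℕ} (Ω : Set (Vec n)) (p : ℝ) (R : Vec n → Mat n)
    (DR : Vec n → Fin n → Mat n) : Prop :=
  SobolevFn Ω p (fun x (ij : Fin n × Fin n) => R x ij.1 ij.2) (fun x ij j => DR x j ij.1 ij.2)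

/-- The conjugate exponent of `p`, as an extended real. -/
def conjE (p : ℝ) : ℝ≥0∞ := if p = 1 then ⊤ else ENNReal.ofReal (p / (p - 1))

/-- Weak convergence in `L^p(Ω)` of a family indexed by `ε > 0`, as `ε → 0`:
testing componentwise against all `L^{p'}` functions. -/
def WeakLpFam {n : ℕ} {ι : Type*} (Ω : Set (Vec n)) (p : ℝ) (f : ℝ → Vec n → ι → ℝ)
    (g : Vec n → ι → ℝ) : Prop :=
  ∀ φ : Vec n → ℝ, MemLp φ (conjE p) (volume.restrict Ω) →
    ∀ i, Tendsto (fun ε => ∫ x in Ω, f ε x i * φ x) (𝓝[>] (0 : ℝ))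
      (𝓝 (∫ x in Ω, g x i * φ x))

/-- Strong convergence in `L^p(Ω)` of a family indexed by `ε > 0`, as `ε → 0`. -/
def StrongLpFam {n : ℕ} {ι : Type*} (Ω : Set (Vec n)) (p : ℝ) (f : ℝ → Vec n → ι → ℝ)
    (g : Vec n → ι → ℝ) : Prop :=
  ∀ i, Tendsto (fun ε => ∫ x in Ω, |f ε x i - g x i| ^ p) (𝓝[>] (0 : ℝ)) (𝓝 0)

/-- One-dimensional Sobolev space `W^{1,p}(J)` with explicit weak derivative. -/
def Sobolev1D {ι : Type*} (J : Set ℝ) (p : ℝ) (ν ν' : ℝ → ι → ℝ) : Prop :=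
  (∀ i, MemLp (fun t => ν t i) (ENNReal.ofReal p) (volume.restrict J)) ∧
  (∀ i, MemLp (fun t => ν' t i) (ENNReal.ofReal p) (volume.restrict J)) ∧
  ∀ φ : ℝ → ℝ, ContDiff ℝ (⊤ : ℕ∞) φ → HasCompactSupport φ → tsupport φ ⊆ J →
    ∀ i, ∫ t in J, ν t i * deriv φ t = - ∫ t in J, ν' t i * φ t

/-- The open unit cube `(0,1)ⁿ`. -/
def unitCube (n : ℕ) : Set (Vec n) := {x | ∀ i, x i ∈ Set.Ioo (0 : ℝ) 1}

/-- The gradient matrix of a (differentiable) map, `(∇φ)_{ij} = ∂_j φ_i`. -/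
def gradMat {n : ℕ} (φ : Vec n → Vec n) (x : Vec n) : Mat n :=
  Matrix.of fun i j => fderiv ℝ φ x (bas j) i

/-- The quasiconvex envelope of `W`, via the infimum over smooth compactly supported
perturbations on the unit cube (which has measure one). -/
def qcEnv {n : ℕ} (W : Mat n → ℝ) (F : Mat n) : ℝ :=
  sInf {v : ℝ | ∃ φ : Vec n → Vec n, ContDiff ℝ (⊤ : ℕ∞) φ ∧ tsupport φ ⊆ unitCube n ∧
    v = ∫ x in unitCube n, W (F + gradMat φ x)}

/-- The minor of `F` with rows `s` and columns `t`. -/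
def minor {n : ℕ} (F : Mat n) (s t : Finset (Fin n)) (h : t.card = s.card) : ℝ :=
  Matrix.det (Matrix.of fun i j : Fin s.card =>
    F (s.orderIsoOfFin rfl i).1 (t.orderIsoOfFin h j).1)

/-- Index type enumerating all minors of an `n × n` matrix. -/
def MinorIdx (n : ℕ) := {q : Finset (Fin n) × Finset (Fin n) // q.2.card = q.1.card}

/-- The vector of all minors of a matrix. -/
def minors {n : ℕ} (F : Mat n) : MinorIdx n → ℝ := fun q => minor F q.1.1 q.1.2 q.2

/-- A function of matrices is polyconvex if it is a convex function of the vector of minors. -/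
def Polyconvex {n : ℕ} (W : Mat n → ℝ) : Prop :=
  ∃ g : (MinorIdx n → ℝ) → ℝ, ConvexOn ℝ Set.univ g ∧ ∀ F, W F = g (minors F)

/-- The set `𝒜` of matrices of the form `R + d ⊗ e_n` with `R ∈ SO(n)`. -/
def Astar (n : ℕ) : Set (Mat n) := {F | ∃ R ∈ SO n, ∃ d : Fin n → ℝ, F = R + outerM d eL}

end LayeredRigidity

/-!
Write `A = R₂ - R₁` and `Q = R₁ᵀ R₂ ∈ SO(n)`. The squared norm of the `j`-th column of `A` is
`2 - 2 Q_jj`. Composing `Q` with the reflection in `e_n` gives an orthogonal matrix of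
determinant `-1`, whose trace is at most `n - 2`; hence the last column carries at most half of
`|A|²`, and some column `j ≠ n` has `|A e_j|² ≥ |A|² / (2(n - 1))`. On every segment of `P` in
direction `e_j`, which has length `l`, the function `t ↦ |t A e_j + b|` is at least `l |A e_j| / 4`
on an interval of length `l / 4`. Integrating this over the remaining coordinates gives the bound,
and the thickness `h` only enters through `|P|`.
-/

namespace LayeredRigidity

open Matrix

section Orthogonal

variable {ι : Type*} [Fintype ι] [DecidableEq ι]

theorem sum_sq_sub_apply_of_transpose_mul_self_eq_one {A B : Matrix ι ι ℝ} (hA : Aᵀ * A = 1)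
    (hB : Bᵀ * B = 1) (j : ι) : ∑ k, (B - A) k j ^ 2 = 2 - 2 * (Aᵀ * B) j j := by
  have hAj := congr_fun₂ hA j j
  have hBj := congr_fun₂ hB j j
  simp only [mul_apply, transpose_apply, one_apply_eq] at hAj hBj ⊢
  have hk : ∀ k, (B - A) k j ^ 2 = B k j * B k j + A k j * A k j - 2 * (A k j * B k j) :=
    fun k => by rw [Matrix.sub_apply]; ring
  simp only [hk, Finset.sum_add_distrib, Finset.sum_sub_distrib, ← Finset.mul_sum, hAj, hBj]
  ring

/-- `M` has the eigenvalue `-1`, so `‖M - 1‖_F ≥ 2`, while `‖M - 1‖_F² = 2 (card ι - tr M)`. -/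
theorem trace_le_card_sub_two_of_det_eq_neg_one {M : Matrix ι ι ℝ} (hM : Mᵀ * M = 1)
    (hdet : M.det = -1) : M.trace ≤ Fintype.card ι - 2 := by
  have hdet' : (1 + M).det = 0 := by
    have h : M * (Mᵀ + 1) = 1 + M := by rw [mul_add, mul_one, mul_eq_one_comm.1 hM]
    have := congr_arg det h
    rw [det_mul, hdet, ← transpose_one, ← transpose_add, det_transpose, transpose_one,
      add_comm] at this
    linarith
  obtain ⟨u, hu0, hu⟩ := exists_mulVec_eq_zero_iff.2 hdet'
  have hBu : ∀ k, ∑ i, (M - 1) k i * u i = -2 * u k := by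
    intro k
    have := congr_fun hu k
    simp only [mulVec, dotProduct, Pi.zero_apply, Matrix.add_apply, add_mul,
      Finset.sum_add_distrib, one_apply, ite_mul, one_mul, zero_mul, Finset.sum_ite_eq,
      Finset.mem_univ, if_true] at this
    simp only [Matrix.sub_apply, sub_mul, Finset.sum_sub_distrib, one_apply, ite_mul, one_mul,
      zero_mul, Finset.sum_ite_eq, Finset.mem_univ, if_true]
    linarith
  have hfrob : ∑ k, ∑ i, (M - 1) k i ^ 2 = 2 * (Fintype.card ι - M.trace) := by
    rw [Finset.sum_comm]
    have := fun i => sum_sq_sub_apply_of_transpose_mul_self_eq_one (A := 1) (by simp) hM i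
    simp only [transpose_one, one_mul] at this
    simp only [this, Finset.sum_sub_distrib, ← Finset.mul_sum, trace, diag, Finset.sum_const,
      Finset.card_univ, nsmul_eq_mul]
    ring
  have hupos : 0 < ∑ i, u i ^ 2 := by
    obtain ⟨i, hi⟩ := Function.ne_iff.1 hu0
    exact Finset.sum_pos' (fun i _ => sq_nonneg _) ⟨i, Finset.mem_univ _, pow_two_pos_of_ne_zero hi⟩
  have hCS : 4 * ∑ i, u i ^ 2 ≤ (∑ k, ∑ i, (M - 1) k i ^ 2) * ∑ i, u i ^ 2 := by
    calc 4 * ∑ i, u i ^ 2 = ∑ k, (∑ i, (M - 1) k i * u i) ^ 2 := by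
          simp only [hBu, mul_pow, Finset.mul_sum]; norm_num
      _ ≤ ∑ k, (∑ i, (M - 1) k i ^ 2) * ∑ i, u i ^ 2 :=
          Finset.sum_le_sum fun k _ => Finset.sum_mul_sq_le_sq_mul_sq _ _ _
      _ = _ := (Finset.sum_mul ..).symm
  have := le_of_mul_le_mul_right hCS hupos
  linarith

theorem trace_sub_two_mul_apply_le {Q : Matrix ι ι ℝ} (hQ : Qᵀ * Q = 1) (hdet : Q.det = 1)
    (l : ι) : Q.trace - 2 * Q l l ≤ Fintype.card ι - 2 := by
  set D : Matrix ι ι ℝ := diagonal fun i => if i = l then -1 else 1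
  have hDD : Dᵀ * D = 1 := by
    ext i j
    simp only [D, diagonal_transpose, diagonal_mul_diagonal, diagonal_apply, one_apply]
    split_ifs <;> norm_num
  have hQD : (Q * D)ᵀ * (Q * D) = 1 := by
    rw [transpose_mul, mul_assoc, ← mul_assoc Qᵀ, hQ, one_mul, hDD]
  have hdetQD : (Q * D).det = -1 := by simp [D, det_diagonal, hdet]
  have htr : (Q * D).trace = Q.trace - 2 * Q l l := by
    simp only [trace, diag, D, mul_diagonal]
    rw [← Finset.sum_erase_add _ _ (Finset.mem_univ l),
      Finset.sum_congr rfl fun i hi => by rw [if_neg (Finset.ne_of_mem_erase hi), mul_one],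
      Finset.sum_erase_eq_sub (Finset.mem_univ l), if_pos rfl]
    ring
  exact htr ▸ trace_le_card_sub_two_of_det_eq_neg_one hQD hdetQD

end Orthogonal

theorem frob_sq {n : ℕ} (A : Mat n) : frob A ^ 2 = ∑ j, ∑ i, A i j ^ 2 := by
  rw [frob, Real.sq_sqrt (by positivity), Finset.sum_comm]

theorem frob_le_mul_norm_col {n : ℕ} {A : Mat n} {c : ℝ} (hc : 0 ≤ c) {j : Fin n}
    (h : frob A ^ 2 ≤ c ^ 2 * ∑ i, A i j ^ 2) : frob A ≤ c * ‖WithLp.toLp 2 (A.col j)‖ := by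
  have hA : 0 ≤ frob A := Real.sqrt_nonneg _
  refine (pow_le_pow_iff_left₀ hA (by positivity) two_ne_zero).1 ?_
  rw [mul_pow, EuclideanSpace.norm_sq_eq]
  simpa using h

theorem frob_sq_le_two_mul_sum_erase {n : ℕ} {R₁ R₂ : Mat n} (h₁ : R₁ ∈ SO n) (h₂ : R₂ ∈ SO n)
    (l : Fin n) : frob (R₂ - R₁) ^ 2 ≤ 2 * ∑ j ∈ Finset.univ.erase l, ∑ i, (R₂ - R₁) i j ^ 2 := by
  have h₁' : R₁ᵀ * R₁ = 1 := mul_eq_one_comm.1 h₁.1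
  have h₂' : R₂ᵀ * R₂ = 1 := mul_eq_one_comm.1 h₂.1
  have hQ : (R₁ᵀ * R₂)ᵀ * (R₁ᵀ * R₂) = 1 := by
    rw [transpose_mul, transpose_transpose, mul_assoc, ← mul_assoc R₁, h₁.1, one_mul, h₂']
  have hdet : (R₁ᵀ * R₂).det = 1 := by rw [det_mul, det_transpose, h₁.2, h₂.2, one_mul]
  have key := trace_sub_two_mul_apply_le hQ hdet l
  have hcol := sum_sq_sub_apply_of_transpose_mul_self_eq_one h₁' h₂'
  have hcard : ((Finset.univ.erase l).card : ℝ) = n - 1 := by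
    rw [Finset.card_erase_of_mem (Finset.mem_univ l), Finset.card_univ, Fintype.card_fin,
      Nat.cast_pred (Fin.pos l)]
  rw [trace, ← Finset.sum_erase_add _ _ (Finset.mem_univ l), Fintype.card_fin] at key
  rw [frob_sq, ← Finset.sum_erase_add _ _ (Finset.mem_univ l)]
  simp only [hcol, Finset.sum_sub_distrib, ← Finset.mul_sum, Finset.sum_const, nsmul_eq_mul,
    hcard, diag] at key ⊢
  linarith

theorem exists_ne_frob_sq_le {n : ℕ} (hn : 2 ≤ n) {R₁ R₂ : Mat n} (h₁ : R₁ ∈ SO n)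
    (h₂ : R₂ ∈ SO n) (l : Fin n) :
    ∃ j ≠ l, frob (R₂ - R₁) ^ 2 ≤ 2 * (n - 1) * ∑ i, (R₂ - R₁) i j ^ 2 := by
  have hcard : (Finset.univ.erase l).card = n - 1 := by
    rw [Finset.card_erase_of_mem (Finset.mem_univ l), Finset.card_univ, Fintype.card_fin]
  obtain ⟨j, hj, hmax⟩ := Finset.exists_max_image (Finset.univ.erase l)
    (fun j => ∑ i, (R₂ - R₁) i j ^ 2) (Finset.card_pos.1 (by omega))
  refine ⟨j, Finset.ne_of_mem_erase hj, ?_⟩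
  have hsum := Finset.sum_le_card_nsmul _ _ _ hmax
  rw [hcard, nsmul_eq_mul, Nat.cast_pred (by omega)] at hsum
  linarith [frob_sq_le_two_mul_sum_erase h₁ h₂ l]

section Line

variable {E : Type*} [SeminormedAddCommGroup E] [NormedSpace ℝ E]

theorem exists_Ioo_subset_forall_le_norm_smul_add (a b : E) (α : ℝ) {l : ℝ} (hl : 0 < l) :
    ∃ β, Ioo β (β + l / 4) ⊆ Ioo α (α + l) ∧
      ∀ t ∈ Ioo β (β + l / 4), l / 4 * ‖a‖ ≤ ‖t • a + b‖ := by
  by_cases hleft : ∀ t ∈ Ioo α (α + l / 4), l / 4 * ‖a‖ ≤ ‖t • a + b‖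
  · exact ⟨α, Ioo_subset_Ioo_right (by linarith), hleft⟩
  push Not at hleft
  obtain ⟨s, hs, hsmall⟩ := hleft
  refine ⟨α + 3 * l / 4, Ioo_subset_Ioo (by linarith) (by linarith), fun t ht => ?_⟩
  have hdist : (t - s) * ‖a‖ ≤ ‖t • a + b‖ + ‖s • a + b‖ := by
    calc (t - s) * ‖a‖ = ‖(t • a + b) - (s • a + b)‖ := by
          rw [add_sub_add_right_eq_sub, ← sub_smul, norm_smul,
            Real.norm_of_nonneg (by linarith [ht.1, hs.2])]
      _ ≤ _ := norm_sub_le _ _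
  nlinarith [ht.1, hs.2, norm_nonneg a]

theorem le_lintegral_norm_smul_add_rpow (a b : E) {p : ℝ} (hp : 0 ≤ p) (α : ℝ) {l : ℝ}
    (hl : 0 < l) :
    ENNReal.ofReal (l / 4 * (l / 4 * ‖a‖) ^ p) ≤
      ∫⁻ t in Ioo α (α + l), ENNReal.ofReal (‖t • a + b‖ ^ p) := by
  obtain ⟨β, hsub, hbound⟩ := exists_Ioo_subset_forall_le_norm_smul_add a b α hl
  calc ENNReal.ofReal (l / 4 * (l / 4 * ‖a‖) ^ p)
      = ∫⁻ _ in Ioo β (β + l / 4), ENNReal.ofReal ((l / 4 * ‖a‖) ^ p) := by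
        rw [setLIntegral_const, Real.volume_Ioo, add_sub_cancel_left,
          ← ENNReal.ofReal_mul (by positivity), mul_comm]
    _ ≤ ∫⁻ t in Ioo β (β + l / 4), ENNReal.ofReal (‖t • a + b‖ ^ p) :=
        setLIntegral_mono' measurableSet_Ioo fun t ht =>
          ENNReal.ofReal_le_ofReal (Real.rpow_le_rpow (by positivity) (hbound t ht) hp)
    _ ≤ _ := lintegral_mono_set hsub

end Line

theorem setLIntegral_univ_pi_eq_lintegral_insertNth {α : Type*} [MeasureSpace α]
    [SigmaFinite (volume : Measure α)] {m : ℕ} (j : Fin (m + 1)) (s : Fin (m + 1) → Set α)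
    {f : (Fin (m + 1) → α) → ℝ≥0∞} (hf : Measurable f) :
    ∫⁻ x in univ.pi s, f x =
      ∫⁻ y in univ.pi (fun i => s (j.succAbove i)), ∫⁻ t in s j, f (j.insertNth t y) := by
  set e := (MeasurableEquiv.piFinSuccAbove (fun _ => α) j).trans MeasurableEquiv.prodComm
  have he : MeasurePreserving e.symm :=
    ((volume_preserving_piFinSuccAbove (fun _ => α) j).trans
      (Measure.measurePreserving_swap (μ := volume) (ν := volume))).symm e
  have hpre : e.symm ⁻¹' univ.pi s = univ.pi (fun i => s (j.succAbove i)) ×ˢ s j := by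
    ext z
    simp [e, j.forall_iff_succAbove, and_comm, MeasurableEquiv.prodComm]
  rw [← he.setLIntegral_comp_preimage_emb e.symm.measurableEmbedding, hpre,
    Measure.volume_eq_prod,
    setLIntegral_prod (fun z => f (e.symm z)) (hf.comp e.symm.measurable).aemeasurable]
  rfl

theorem toLp_mulVec_insertNth_add {ι : Type*} [Fintype ι] {m : ℕ}
    (A : Matrix ι (Fin (m + 1)) ℝ) (d : ι → ℝ) (j : Fin (m + 1)) (t : ℝ) (y : Fin m → ℝ) :
    WithLp.toLp 2 (A *ᵥ j.insertNth t y + d) =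
      t • WithLp.toLp 2 (A.col j) + WithLp.toLp 2 (A *ᵥ j.insertNth 0 y + d) := by
  ext k
  simp only [Pi.add_apply, mulVec, dotProduct, Fin.sum_univ_succAbove _ j,
    Fin.insertNth_apply_same, Fin.insertNth_apply_succAbove, WithLp.toLp_add, PiLp.add_apply,
    PiLp.smul_apply, col_apply, smul_eq_mul, mul_zero, zero_add]
  ring

theorem le_setIntegral_pi_Ioo_norm_mulVec_add_rpow {ι : Type*} [Fintype ι] {m : ℕ}
    (A : Matrix ι (Fin (m + 1)) ℝ) (d : ι → ℝ) {p : ℝ} (hp : 0 ≤ p) (j : Fin (m + 1))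
    (o w : Fin (m + 1) → ℝ) (hw : ∀ i, 0 < w i) :
    w j / 4 * (w j / 4 * ‖WithLp.toLp 2 (A.col j)‖) ^ p * ∏ i, w (j.succAbove i) ≤
      ∫ x in univ.pi (fun i => Ioo (o i) (o i + w i)), ‖WithLp.toLp 2 (A *ᵥ x + d)‖ ^ p := by
  have hwj := hw j
  set G : (Fin (m + 1) → ℝ) → ℝ := fun x => ‖WithLp.toLp 2 (A *ᵥ x + d)‖ ^ p
  have hG : Continuous G := by
    refine Continuous.rpow_const ?_ fun _ => Or.inr hp
    fun_prop
  have hint : IntegrableOn G (univ.pi fun i => Ioo (o i) (o i + w i)) :=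
    (hG.continuousOn.integrableOn_compact (isCompact_univ_pi fun i => isCompact_Icc)).mono_set
      (pi_mono fun i _ => Ioo_subset_Icc_self)
  rw [← ENNReal.ofReal_le_ofReal_iff (setIntegral_nonneg
      (MeasurableSet.univ_pi fun i => measurableSet_Ioo) fun x _ => by positivity),
    ofReal_integral_eq_lintegral_ofReal hint
      (ae_of_all _ fun x => Real.rpow_nonneg (norm_nonneg _) _),
    setLIntegral_univ_pi_eq_lintegral_insertNth j _ hG.measurable.ennreal_ofReal]
  calc ENNReal.ofReal (w j / 4 * (w j / 4 * ‖WithLp.toLp 2 (A.col j)‖) ^ p *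
        ∏ i, w (j.succAbove i))
      = ∫⁻ _ in univ.pi fun i => Ioo (o (j.succAbove i)) (o (j.succAbove i) + w (j.succAbove i)),
          ENNReal.ofReal (w j / 4 * (w j / 4 * ‖WithLp.toLp 2 (A.col j)‖) ^ p) := by
        rw [setLIntegral_const, Real.volume_pi_Ioo, ENNReal.ofReal_mul (by positivity),
          ENNReal.ofReal_prod_of_nonneg fun i _ => (hw _).le]
        simp
    _ ≤ _ := lintegral_mono fun y => by
        convert le_lintegral_norm_smul_add_rpow (WithLp.toLp 2 (A.col j))
          (WithLp.toLp 2 (A *ᵥ j.insertNth 0 y + d)) hp (o j) (hw j) using 3 with t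
        simp only [G]
        rw [toLp_mulVec_insertNth_add _ _ _ t]

theorem setIntegral_cuboid_eq_setIntegral_univ_pi {m : ℕ} (A : Mat (m + 1)) (d : Fin (m + 1) → ℝ)
    (p : ℝ) (o : Fin (m + 1) → ℝ) (l h : ℝ) :
    ∫ x in {x : Vec (m + 1) |
        (∀ i : Fin (m + 1), (i : ℕ) < m + 1 - 1 → x i ∈ Ioo (o i) (o i + l)) ∧
        coordLast x ∈ Ioo (o ⟨m + 1 - 1, by omega⟩) (o ⟨m + 1 - 1, by omega⟩ + h)},
      Real.sqrt (∑ k, (matVec A x k + d k) ^ 2) ^ p =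
    ∫ x in univ.pi fun i => Ioo (o i) (o i + if i = Fin.last m then h else l),
      ‖WithLp.toLp 2 (A *ᵥ x + d)‖ ^ p := by
  have hlast : (⟨m, by omega⟩ : Fin (m + 1)) = Fin.last m := rfl
  have hset : {x : Vec (m + 1) |
      (∀ i : Fin (m + 1), (i : ℕ) < m + 1 - 1 → x i ∈ Ioo (o i) (o i + l)) ∧
      coordLast x ∈ Ioo (o ⟨m + 1 - 1, by omega⟩) (o ⟨m + 1 - 1, by omega⟩ + h)} =
      WithLp.ofLp ⁻¹' univ.pi fun i => Ioo (o i) (o i + if i = Fin.last m then h else l) := by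
    ext x
    simp [coordLast, hlast, Fin.forall_fin_succ', Fin.castSucc_ne_last]
  rw [hset, ← (PiLp.volume_preserving_ofLp _).setIntegral_preimage_emb
    (MeasurableEquiv.toLp 2 _).symm.measurableEmbedding]
  simp [EuclideanSpace.norm_eq, matVec, toVec, mulVec, dotProduct]

theorem mul_prod_succAbove_ite_last {m : ℕ} {j : Fin (m + 1)} (hj : j ≠ Fin.last m) (l h : ℝ) :
    l * ∏ i, (if j.succAbove i = Fin.last m then h else l) = l ^ m * h := by
  have hprod := Fin.prod_univ_succAbove (fun i => if i = Fin.last m then h else l) j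
  rw [if_neg hj, Fin.prod_univ_castSucc] at hprod
  rw [← hprod]
  simp [Fin.castSucc_ne_last]

/-- Lemma A.1, reverse Poincaré inequality on thin cuboids: there is a
constant `C > 0` depending only on `n` and `p` such that for every cuboid
`P = O × I` (with `O` a cube of side `l` and `I` an interval of length `h`), all
`R₁, R₂ ∈ SO(n)` and all `d ∈ ℝⁿ`,
`∫_P |(R₂ − R₁)x + d|^p dx ≥ C l^p |P| |R₂ − R₁|^p`. -/
theorem statement18 {n : ℕ} (hn : 2 ≤ n) (p : ℝ) (hp : 1 ≤ p) :
    ∃ C : ℝ, 0 < C ∧ ∀ (o : Fin n → ℝ) (l h : ℝ), 0 < l → 0 < h →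
      ∀ R₁ ∈ SO n, ∀ R₂ ∈ SO n, ∀ d : Fin n → ℝ,
        C * l ^ p * (l ^ (n - 1) * h) * frob (R₂ - R₁) ^ p ≤
          ∫ x in {x : Vec n |
              (∀ i : Fin n, (i : ℕ) < n - 1 → x i ∈ Set.Ioo (o i) (o i + l)) ∧
              coordLast x ∈ Set.Ioo (o ⟨n - 1, by omega⟩) (o ⟨n - 1, by omega⟩ + h)},
            (Real.sqrt (∑ k, (matVec (R₂ - R₁) x k + d k) ^ 2)) ^ p := by
  obtain ⟨m, rfl⟩ : ∃ m, n = m + 1 := ⟨n - 1, by omega⟩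
  have hp0 : 0 ≤ p := by linarith
  set c := Real.sqrt (2 * m)
  have hc : 0 < c := Real.sqrt_pos.2 (by norm_cast; omega)
  refine ⟨(4 * c)⁻¹ ^ p / 4, by positivity, fun o l h hl hh R₁ hR₁ R₂ hR₂ d => ?_⟩
  obtain ⟨j, hj, hcol⟩ := exists_ne_frob_sq_le hn hR₁ hR₂ (Fin.last m)
  set A := R₂ - R₁
  set a := ‖WithLp.toLp 2 (A.col j)‖
  have hA : 0 ≤ frob A := Real.sqrt_nonneg _
  have hfrob : frob A ≤ c * a :=
    frob_le_mul_norm_col hc.le (by rw [Real.sq_sqrt (by positivity)]; convert hcol using 3; simp)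
  set w : Fin (m + 1) → ℝ := fun i => if i = Fin.last m then h else l
  have hw : ∀ i, 0 < w i := fun i => by dsimp only [w]; split_ifs <;> assumption
  have hwj : w j = l := if_neg hj
  rw [setIntegral_cuboid_eq_setIntegral_univ_pi]
  calc (4 * c)⁻¹ ^ p / 4 * l ^ p * (l ^ (m + 1 - 1) * h) * frob A ^ p
      = l ^ m * h / 4 * ((4 * c)⁻¹ * l * frob A) ^ p := by
        rw [Real.mul_rpow (by positivity) hA, Real.mul_rpow (by positivity) hl.le,
          Nat.add_sub_cancel]
        ring
    _ ≤ l ^ m * h / 4 * (l / 4 * a) ^ p := by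
        gcongr l ^ m * h / 4 * ?_ ^ p
        calc (4 * c)⁻¹ * l * frob A = l / 4 * (frob A / c) := by field_simp
          _ ≤ l / 4 * a := by gcongr; rwa [div_le_iff₀ hc, mul_comm]
    _ = w j / 4 * (w j / 4 * a) ^ p * ∏ i, w (j.succAbove i) := by
        rw [hwj, ← mul_prod_succAbove_ite_last hj]
        ring
    _ ≤ _ := le_setIntegral_pi_Ioo_norm_mulVec_add_rpow A d hp0 j o w hw

end LayeredRigidity
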